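/- arXiv:2306.10475 — 5 statements merged into one kernel-verified Lean document; each statement's English description precedes it below -/
import Mathlib

section
/- Let G = ∏_{r=1}^d G_r be the Cartesian product of d copies of the cycle graph C_{p₁}, so that G has p = p₁^d vertices. Fix j* ∈ V(G) and z* ∈ {1,…,n}, set τ := min(z*/n, 1 − z*/n), and assume nτ ≥ 2p₁. Then m_G(1/(4d)) ≥ p/8^d. -/
open MeasureTheory ProbabilityTheory Finset

noncomputable section

attribute [local instance] Classical.propDecidable

/-- The CUSUM transform of a `p × n` data matrix, at coordinate `j` and (1-based) time `t`. -/
def cusum (n : ℕ) {V : Type} (M : V × Fin n → ℝ) (j : V) (t : ℕ) : ℝ :=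
  Real.sqrt ((t : ℝ) * ((n : ℝ) - (t : ℝ)) / (n : ℝ)) *
    ((1 / ((n : ℝ) - (t : ℝ))) * ∑ r ∈ univ.filter (fun r : Fin n => t ≤ (r : ℕ)), M (j, r)
      - (1 / (t : ℝ)) * ∑ r ∈ univ.filter (fun r : Fin n => (r : ℕ) < t), M (j, r))

/-- The quadratic SpreadDetect statistic. -/
def Qstat (n : ℕ) {V : Type} [Fintype V] (gd : V → V → ℕ) (X : V × Fin n → ℝ)
    (j : V) (t : ℕ) : ℝ :=
  ∑ k ∈ univ.filter (fun k : V => t + gd j k < n), ((cusum n X k (t + gd j k)) ^ 2 - 1)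

/-- The linear SpreadDetect statistic. -/
def Lstat (n : ℕ) {V : Type} [Fintype V] (gd : V → V → ℕ) (X : V × Fin n → ℝ)
    (j : V) (t : ℕ) : ℝ :=
  |∑ k ∈ univ.filter (fun k : V => t + gd j k < n), cusum n X k (t + gd j k)|

/-- The law `P_{j*,z*,μ⁰,μ¹}` of the data matrix. -/
def spreadMeasure (n : ℕ) {V : Type} [Fintype V] (gd : V → V → ℕ) (jstar : V) (zstar : ℕ)
    (μ0 μ1 : V → ℝ) : Measure (V × Fin n → ℝ) :=
  Measure.pi (fun jt : V × Fin n =>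
    gaussianReal (if (jt.2 : ℕ) + 1 ≤ zstar + gd jt.1 jstar then μ0 jt.1 else μ1 jt.1) 1)

/-- The set `𝒥_{t*,k*}(C₁)`. -/
def JSet {V : Type} [Fintype V] (gd : V → V → ℕ) (jstar : V) (zstar : ℕ) (C1 : ℝ)
    (tstar : ℕ) (kstar : V) : Finset V :=
  univ.filter (fun j : V =>
    C1 * (|(zstar : ℝ) - (tstar : ℝ)| + (gd jstar kstar : ℝ)) ≤
      |((zstar : ℝ) + (gd j jstar : ℝ)) - ((tstar : ℝ) + (gd j kstar : ℝ))|)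

/-- `m_G(C₁)`, the minimal cardinality of `𝒥_{t*,k*}(C₁)` over `t* ∈ {1,…,n−1}`, `k* ∈ V`. -/
def mG (n : ℕ) {V : Type} [Fintype V] (gd : V → V → ℕ) (jstar : V) (zstar : ℕ)
    (C1 : ℝ) : ℕ :=
  sInf {c : ℕ | ∃ tstar : ℕ, 1 ≤ tstar ∧ tstar ≤ n - 1 ∧ ∃ kstar : V,
    c = (JSet gd jstar zstar C1 tstar kstar).card}

/-- The distance on the cycle graph `C_{p₁}` with vertices `Fin p₁`. -/
def cycleDist (p1 : ℕ) (a b : Fin p1) : ℕ :=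
  min ((a : ℤ) - (b : ℤ)).natAbs (p1 - ((a : ℤ) - (b : ℤ)).natAbs)

/-- The distance on the `d`-fold Cartesian product of cycles `C_{p₁}`. -/
def torusDist (p1 d : ℕ) (x y : Fin d → Fin p1) : ℕ :=
  ∑ r : Fin d, cycleDist p1 (x r) (y r)

/-!
Call `a` on the far side of `(u, v)` when `2 (d(a, u) - d(a, v)) ≥ d(u, v)`. On the cycle `C_p`,
walking from `u` through `v` (at distance `m ≤ p/2`), the vertex at step `t` has distances `t` and
`|t - m|` to `u` and `v` as long as `t ≤ p/2`, so the steps `t ∈ [3m/4, p/2]` give at least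
`p/8` far-side vertices. Distances on the torus are sums of cycle distances, so the product of
the coordinatewise far sides lies on the far side in `G`, which has at least `p₁^d / 8^d` vertices.
Finally, if `t* ≤ z*` every `j` on the far side of `(j*, k*)` satisfies
`|z* - t* + d(j, j*) - d(j, k*)| ≥ (|z* - t*| + d(j*, k*)) / 2`, and symmetrically for
`(k*, j*)` when `z* ≤ t*`; as `1/(4d) ≤ 1/2`, the far side lies in `𝒥_{t*,k*}(1/(4d))`.
-/

def farSide {V : Type} [Fintype V] (gd : V → V → ℕ) (u v : V) : Finset V :=
  univ.filter fun a : V => (gd u v : ℤ) ≤ 2 * ((gd a u : ℤ) - gd a v)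

section Cycle

variable {p : ℕ}

lemma cycleDist_comm (a b : Fin p) : cycleDist p a b = cycleDist p b a := by
  unfold cycleDist
  omega

lemma two_mul_cycleDist_le (a b : Fin p) : 2 * cycleDist p a b ≤ p := by
  unfold cycleDist
  omega

lemma cycleDist_eq_natAbs_of_modEq {a b : Fin p} {z : ℤ} (hz : 2 * z.natAbs ≤ p)
    (h : (a : ℤ) - b ≡ z [ZMOD p]) : cycleDist p a b = z.natAbs := by
  obtain ⟨k, hk⟩ := (Int.modEq_iff_dvd.1 h)
  have ha := a.isLt
  have hb := b.isLt
  have hk1 : k ≤ 1 := by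
    by_contra!
    have := mul_le_mul_of_nonneg_left (show (2 : ℤ) ≤ k by omega) (Int.natCast_nonneg p)
    omega
  have hk2 : -1 ≤ k := by
    by_contra!
    have := mul_le_mul_of_nonneg_left (show k ≤ -2 by omega) (Int.natCast_nonneg p)
    omega
  unfold cycleDist
  interval_cases k <;> omega

lemma exists_sign_modEq_cycleDist (a b : Fin p) :
    ∃ e : ℤ, (e = 1 ∨ e = -1) ∧ (b : ℤ) - a ≡ e * cycleDist p a b [ZMOD p] := by
  have ha := a.isLt
  have hb := b.isLt
  unfold cycleDist
  by_cases h : ((a : ℤ) - b).natAbs ≤ p - ((a : ℤ) - b).natAbs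
  · rcases le_total (a : ℤ) b with hab | hab
    · exact ⟨1, .inl rfl, Int.modEq_iff_dvd.2 ⟨0, by omega⟩⟩
    · exact ⟨-1, .inr rfl, Int.modEq_iff_dvd.2 ⟨0, by omega⟩⟩
  · rcases le_total (a : ℤ) b with hab | hab
    · exact ⟨-1, .inr rfl, Int.modEq_iff_dvd.2 ⟨-1, by omega⟩⟩
    · exact ⟨1, .inl rfl, Int.modEq_iff_dvd.2 ⟨1, by omega⟩⟩

lemma mem_farSide_cycle_of_modEq {u v a : Fin p} {e : ℤ} (he : e = 1 ∨ e = -1)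
    (hvu : (v : ℤ) - u ≡ e * cycleDist p u v [ZMOD p]) {t : ℕ}
    (hau : (a : ℤ) ≡ u + e * t [ZMOD p])
    (ht : cycleDist p u v - cycleDist p u v / 4 ≤ t) (htp : 2 * t ≤ p) :
    a ∈ farSide (cycleDist p) u v := by
  set m := cycleDist p u v
  have hm : 2 * m ≤ p := two_mul_cycleDist_le u v
  have hsign (x : ℤ) : (e * x).natAbs = x.natAbs := by rcases he with rfl | rfl <;> omega
  have hu : cycleDist p a u = t := by
    rw [cycleDist_eq_natAbs_of_modEq (z := e * t) (by rw [hsign]; omega), hsign,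
      Int.natAbs_natCast]
    calc (a : ℤ) - u ≡ u + e * t - u [ZMOD p] := hau.sub_right _
      _ = e * t := by ring
  have hv : cycleDist p a v = ((t : ℤ) - m).natAbs := by
    rw [cycleDist_eq_natAbs_of_modEq (z := e * ((t : ℤ) - m)) (by rw [hsign]; omega), hsign]
    calc (a : ℤ) - v ≡ u + e * t - v [ZMOD p] := hau.sub_right _
      _ = e * t - (v - u) := by ring
      _ ≡ e * t - e * m [ZMOD p] := (Int.ModEq.refl _).sub hvu
      _ = e * ((t : ℤ) - m) := by ring
  simp only [farSide, mem_filter, mem_univ, true_and, hu, hv]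
  omega

open scoped Fin.IntCast in
lemma card_farSide_cycle (u v : Fin p) : p ≤ 8 * (farSide (cycleDist p) u v).card := by
  rcases Nat.eq_zero_or_pos p with rfl | hp
  · exact Nat.zero_le _
  have : NeZero p := ⟨hp.ne'⟩
  set m := cycleDist p u v
  have hm : 2 * m ≤ p := two_mul_cycleDist_le u v
  obtain ⟨e, he, hvu⟩ := exists_sign_modEq_cycleDist u v
  let walk : ℕ → Fin p := fun t => ((u + e * t : ℤ) : Fin p)
  have walk_modEq (t : ℕ) : ((walk t : ℕ) : ℤ) ≡ u + e * t [ZMOD p] := by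
    rw [Fin.val_intCast, Int.toNat_of_nonneg (Int.emod_nonneg _ (by omega))]
    exact Int.mod_modEq _ _
  have hmem : ∀ t ∈ Icc (m - m / 4) (p / 2), walk t ∈ farSide (cycleDist p) u v := by
    intro t ht
    rw [mem_Icc] at ht
    exact mem_farSide_cycle_of_modEq he hvu (walk_modEq t) ht.1 (by omega)
  have hinj : Set.InjOn walk (Icc (m - m / 4) (p / 2)) := by
    intro t₁ ht₁ t₂ ht₂ heq
    simp only [coe_Icc, Set.mem_Icc] at ht₁ ht₂
    have h : (u : ℤ) + e * t₁ ≡ u + e * t₂ [ZMOD p] :=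
      (walk_modEq t₁).symm.trans (heq ▸ walk_modEq t₂)
    have h0 := Int.eq_zero_of_abs_lt_dvd (Int.modEq_iff_dvd.1 h)
      (by rcases he with rfl | rfl <;> (rw [abs_lt]; omega))
    rcases he with rfl | rfl <;> omega
  have hcard := card_le_card_of_injOn walk hmem hinj
  rw [Nat.card_Icc] at hcard
  omega

end Cycle

section Torus

variable {p d : ℕ}

lemma torusDist_comm (x y : Fin d → Fin p) : torusDist p d x y = torusDist p d y x := by
  simp only [torusDist, cycleDist_comm (x _)]

lemma piFinset_farSide_cycle_subset (u v : Fin d → Fin p) :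
    Fintype.piFinset (fun r => farSide (cycleDist p) (u r) (v r)) ⊆
      farSide (torusDist p d) u v := by
  intro j hj
  rw [Fintype.mem_piFinset] at hj
  simp only [farSide, mem_filter, mem_univ, true_and] at hj ⊢
  simp only [torusDist, Nat.cast_sum]
  rw [← sum_sub_distrib, mul_sum]
  exact sum_le_sum fun r _ => hj r

lemma card_farSide_torus (u v : Fin d → Fin p) :
    p ^ d ≤ 8 ^ d * (farSide (torusDist p d) u v).card :=
  calc p ^ d = ∏ _r : Fin d, p := by simp
    _ ≤ ∏ r, 8 * (farSide (cycleDist p) (u r) (v r)).card :=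
        prod_le_prod' fun r _ => card_farSide_cycle (u r) (v r)
    _ = 8 ^ d * (Fintype.piFinset fun r => farSide (cycleDist p) (u r) (v r)).card := by
        simp [prod_mul_distrib]
    _ ≤ 8 ^ d * (farSide (torusDist p d) u v).card :=
        Nat.mul_le_mul_left _ (card_le_card (piFinset_farSide_cycle_subset u v))

end Torus

section JSet

variable {V : Type} [Fintype V] (gd : V → V → ℕ) {jstar kstar : V} {zstar tstar : ℕ} {C1 : ℝ}

lemma exists_farSide_subset_JSet (hsymm : gd jstar kstar = gd kstar jstar) (hC1 : C1 ≤ 1 / 2) :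
    ∃ u v, farSide gd u v ⊆ JSet gd jstar zstar C1 tstar kstar := by
  have half_bound : ∀ x y : ℝ, 0 ≤ x → x ≤ 2 * y → C1 * x ≤ y := fun x y hx hxy => by nlinarith
  rcases le_total tstar zstar with h | h
  · refine ⟨jstar, kstar, fun j hj => ?_⟩
    simp only [farSide, JSet, mem_filter, mem_univ, true_and] at hj ⊢
    have hj' : (gd jstar kstar : ℝ) ≤ 2 * ((gd j jstar : ℝ) - gd j kstar) := by exact_mod_cast hj
    have hzt : (tstar : ℝ) ≤ zstar := by exact_mod_cast h
    refine half_bound _ _ (by positivity) ?_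
    rw [abs_of_nonneg (sub_nonneg.2 hzt)]
    linarith [le_abs_self ((zstar : ℝ) + gd j jstar - (tstar + gd j kstar))]
  · refine ⟨kstar, jstar, fun j hj => ?_⟩
    simp only [farSide, JSet, mem_filter, mem_univ, true_and, ← hsymm] at hj ⊢
    have hj' : (gd jstar kstar : ℝ) ≤ 2 * ((gd j kstar : ℝ) - gd j jstar) := by exact_mod_cast hj
    have hzt : (zstar : ℝ) ≤ tstar := by exact_mod_cast h
    refine half_bound _ _ (by positivity) ?_
    rw [abs_of_nonpos (sub_nonpos.2 hzt)]
    linarith [neg_abs_le ((zstar : ℝ) + gd j jstar - (tstar + gd j kstar))]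

lemma exists_mG_eq_card_JSet [Nonempty V] {n : ℕ} (hn : 2 ≤ n) (jstar : V) (zstar : ℕ) (C1 : ℝ) :
    ∃ tstar kstar, mG n gd jstar zstar C1 = (JSet gd jstar zstar C1 tstar kstar).card := by
  obtain ⟨tstar, -, -, kstar, h⟩ :=
    Nat.sInf_mem (⟨_, 1, le_rfl, by omega, Classical.arbitrary V, rfl⟩ :
      {c : ℕ | ∃ tstar : ℕ, 1 ≤ tstar ∧ tstar ≤ n - 1 ∧ ∃ kstar : V,
        c = (JSet gd jstar zstar C1 tstar kstar).card}.Nonempty)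
  exact ⟨tstar, kstar, h⟩

end JSet

/-- Proposition 2: for the d-fold product of cycles C_{p1}, m_G(1/(4d)) ≥ p/8^d. -/
theorem mG_torus_lower_bound :
    ∀ (n d p1 : ℕ), 1 ≤ n → 1 ≤ d → 3 ≤ p1 →
    ∀ (jstar : Fin d → Fin p1) (zstar : ℕ), 1 ≤ zstar → zstar ≤ n →
    ∀ τ : ℝ, τ = min ((zstar : ℝ) / n) (1 - (zstar : ℝ) / n) →
      2 * (p1 : ℝ) ≤ (n : ℝ) * τ →
      ((p1 : ℝ) ^ d) / 8 ^ d ≤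
        (mG n (torusDist p1 d) jstar zstar (1 / (4 * (d : ℝ))) : ℝ) := by
  intro n d p1 _ hd hp1 jstar zstar _ _ τ hτ hnτ
  have hτ_half : 2 * τ ≤ 1 := by
    rw [hτ]
    linarith [min_le_left ((zstar : ℝ) / n) (1 - zstar / n),
      min_le_right ((zstar : ℝ) / n) (1 - zstar / n)]
  have hn : 2 ≤ n := by
    have hp1' : (3 : ℝ) ≤ p1 := by exact_mod_cast hp1
    have hn' : (2 : ℝ) ≤ n := by nlinarith [(n.cast_nonneg : (0 : ℝ) ≤ n)]
    exact_mod_cast hn'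
  have hC1 : 1 / (4 * (d : ℝ)) ≤ 1 / 2 := by
    have : (1 : ℝ) ≤ d := by exact_mod_cast hd
    rw [div_le_div_iff₀ (by positivity) (by norm_num)]
    linarith
  have : Nonempty (Fin d → Fin p1) := ⟨jstar⟩
  obtain ⟨tstar, kstar, hmG⟩ := exists_mG_eq_card_JSet (torusDist p1 d) hn jstar zstar _
  obtain ⟨u, v, hsub⟩ := exists_farSide_subset_JSet (torusDist p1 d) (tstar := tstar)
    (torusDist_comm jstar kstar) hC1
  have hcard : p1 ^ d ≤ 8 ^ d * mG n (torusDist p1 d) jstar zstar (1 / (4 * (d : ℝ))) :=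
    hmG ▸ (card_farSide_torus u v).trans (Nat.mul_le_mul_left _ (card_le_card hsub))
  rw [div_le_iff₀ (by positivity), mul_comm]
  exact_mod_cast hcard
end
end

section
/- There exists a universal constant C > 0 such that the following holds. Let G be a connected graph on vertex set {1,…,p}, fix z* ∈ {1,…,n−1}, j* ∈ {1,…,p} and C₁ > 0, set τ := min(z*/n, 1 − z*/n), and assume nτ ≥ 2p. Let W ∈ ℝ^{p×n} have independent N(0,1) entries and set E := 𝒯(W). Then with probability at least 1 − 1/(pn), simultaneously for all t* ∈ {1,…,n−1} and k* ∈ {1,…,p} such that t* + d_G(j, k*) ≤ n − 1 for every j ∈ 𝒥_{t*,k*}(C₁), we have Σ_{j ∈ 𝒥_{t*,k*}(C₁)} ( E_{j, z* + d_G(j,j*)} − E_{j, t* + d_G(j,k*)} ) ≤ C·√( |𝒥_{t*,k*}(C₁)|·(|z* − t*| + d_G(k*, j*))·log(pn)/(nτ) ). -/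
open MeasureTheory ProbabilityTheory Finset

noncomputable section

attribute [local instance] Classical.propDecidable

/-!
For fixed `(t*, k*)` the sum is a centred Gaussian linear form `∑ α_{j,r} W_{j,r}`: `α_j` is the
difference of the CUSUM weight vectors at the times `a_j = z* + d(j, j*)` and `b_j = t* + d(j, k*)`,
so its tail is at most `exp (-s² / (2 ‖α‖²))`. Both weight vectors are constant on the three pieces
cut out by `a_j` and `b_j`, and summing the three contributions gives
`‖α_j‖² ≤ 3 |a_j - b_j| (1 / a_j + 1 / (n - a_j))`. Every graph distance is below `p ≤ nτ/2`, so
`a_j` stays `nτ/2` away from `0` and `n`, whence `‖α_j‖² ≤ 12 |a_j - b_j| / (nτ)`, and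
`|a_j - b_j| ≤ |z* - t*| + d(k*, j*)` by the triangle inequality. With `C = 7` each deviation then
has probability at most `(pn)⁻²`, and a union bound over the at most `(n - 1) p` pairs `(t*, k*)`
costs a factor `pn`.
-/

open Real
open scoped NNReal

lemma sub_sq_le_sq_sub_sq {x y : ℝ} (hy : 0 ≤ y) (hyx : y ≤ x) : (x - y) ^ 2 ≤ x ^ 2 - y ^ 2 := by
  nlinarith

lemma pos_and_lt_of_le_of_le_sub {a n : ℕ} {m : ℝ} (hm : 0 < m) (h : m ≤ a ∧ m ≤ n - a) :
    0 < a ∧ a < n := by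
  have han : (a : ℝ) < n := by linarith
  exact ⟨by exact_mod_cast hm.trans_le h.1, by exact_mod_cast han⟩

lemma one_sub_card_mul_le_measureReal_setOf_forall_mem {Ω ι : Type*} [MeasurableSpace Ω]
    (μ : Measure Ω) [IsProbabilityMeasure μ] (s : Finset ι) (P : ι → Ω → Prop) {δ : ℝ}
    (h : ∀ i ∈ s, μ.real {ω | ¬ P i ω} ≤ δ) :
    1 - s.card * δ ≤ μ.real {ω | ∀ i ∈ s, P i ω} := by
  set A := {ω | ∀ i ∈ s, P i ω}
  have hcompl : Aᶜ = ⋃ i ∈ s, {ω | ¬ P i ω} := by ext; simp [A]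
  have hAc : μ.real Aᶜ ≤ s.card * δ := by
    rw [hcompl, ← nsmul_eq_mul]
    exact (measureReal_biUnion_finset_le s _).trans (Finset.sum_le_card_nsmul _ _ _ h)
  have hsplit : 1 ≤ μ.real A + μ.real Aᶜ := by
    simpa [Set.union_compl_self] using measureReal_union_le (μ := μ) A Aᶜ
  linarith

lemma SimpleGraph.dist_lt_card {V : Type*} [Fintype V] (G : SimpleGraph V) (u v : V) :
    G.dist u v < Fintype.card V := by
  by_cases h : G.Reachable u v
  · obtain ⟨w⟩ := h
    exact (SimpleGraph.dist_le w.bypass).trans_lt w.bypass_isPath.length_lt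
  · rw [SimpleGraph.dist_eq_zero_of_not_reachable h]
    exact Fintype.card_pos_iff.mpr ⟨u⟩

lemma SimpleGraph.Connected.abs_dist_sub_dist_le {V : Type*} {G : SimpleGraph V} (hG : G.Connected)
    (j u v : V) : |(G.dist j u : ℝ) - G.dist j v| ≤ G.dist u v := by
  have h₁ : (G.dist j u : ℝ) ≤ G.dist j v + G.dist u v := by
    rw [SimpleGraph.dist_comm (u := u)]; exact_mod_cast hG.dist_triangle
  have h₂ : (G.dist j v : ℝ) ≤ G.dist j u + G.dist u v := by exact_mod_cast hG.dist_triangle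
  rw [abs_sub_le_iff]
  constructor <;> linarith

namespace ProbabilityTheory

lemma hasSubgaussianMGF_id_gaussianReal (v : ℝ≥0) : HasSubgaussianMGF id v (gaussianReal 0 v) where
  integrable_exp_mul := integrable_exp_mul_gaussianReal
  mgf_le t := by simp [mgf_id_gaussianReal]

lemma hasSubgaussianMGF_pi_gaussianReal_sum_mul {ι : Type*} [Fintype ι] (s : Finset ι) (α : ι → ℝ) :
    HasSubgaussianMGF (fun W : ι → ℝ => ∑ i ∈ s, α i * W i) (∑ i ∈ s, ‖α i‖₊ ^ 2)
      (Measure.pi fun _ => gaussianReal 0 1) := by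
  refine HasSubgaussianMGF.sum_of_iIndepFun
    (iIndepFun_pi (X := fun i x => α i * x) fun i => by fun_prop) fun i _ => ?_
  have heval := measurePreserving_eval (fun _ : ι => gaussianReal 0 1) i
  have h := (hasSubgaussianMGF_id_gaussianReal 1).const_mul (α i)
  rw [← heval.map_eq] at h
  convert h.of_map heval.measurable.aemeasurable using 1
  · rfl
  · apply NNReal.eq
    simp only [NNReal.coe_pow, coe_nnnorm, Real.norm_eq_abs, sq_abs]
    exact (mul_one _).symm

/-- The hypothesis `2 ‖α‖² x ≤ ε²` replaces the usual bound `exp (-ε² / (2 ‖α‖²))`, which in Lean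
degenerates to `exp 0` when `α = 0` on `s`. -/
lemma measureReal_pi_gaussianReal_lt_sum_mul_le {ι : Type*} [Fintype ι] (s : Finset ι)
    (α : ι → ℝ) {ε x : ℝ} (hε : 0 ≤ ε) (hx : 2 * (∑ i ∈ s, α i ^ 2) * x ≤ ε ^ 2) :
    (Measure.pi fun _ : ι => gaussianReal 0 1).real {W | ε < ∑ i ∈ s, α i * W i} ≤ exp (-x) := by
  rcases (Finset.sum_nonneg fun i _ => sq_nonneg (α i)).eq_or_lt with h0 | hpos
  · have hα : ∀ i ∈ s, α i = 0 := fun i hi => pow_eq_zero_iff two_ne_zero |>.mp <|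
      (Finset.sum_eq_zero_iff_of_nonneg fun i _ => sq_nonneg (α i)).mp h0.symm i hi
    have hzero (W : ι → ℝ) : ∑ i ∈ s, α i * W i = 0 :=
      Finset.sum_eq_zero fun i hi => by rw [hα i hi, zero_mul]
    have hempty : {W : ι → ℝ | ε < ∑ i ∈ s, α i * W i} = ∅ :=
      Set.eq_empty_of_forall_notMem fun W (hW : ε < _) => (hzero W ▸ hW).not_ge hε
    simp [hempty, (exp_pos _).le]
  · calc (Measure.pi fun _ : ι => gaussianReal 0 1).real {W | ε < ∑ i ∈ s, α i * W i}
      _ ≤ (Measure.pi fun _ : ι => gaussianReal 0 1).real {W | ε ≤ ∑ i ∈ s, α i * W i} :=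
        measureReal_mono <| Set.ofPred_subset_ofPred.mpr fun _ hW => hW.le
      _ ≤ exp (-ε ^ 2 / (2 * ∑ i ∈ s, α i ^ 2)) := by
        simpa using (hasSubgaussianMGF_pi_gaussianReal_sum_mul s α).measure_ge_le hε
      _ ≤ exp (-x) := by
        gcongr
        rw [neg_div, neg_le_neg_iff, le_div_iff₀ (mul_pos two_pos hpos)]
        linarith

end ProbabilityTheory

def cusumPostWeight (n t : ℕ) : ℝ := √((t : ℝ) / (n * (n - t)))

def cusumPreWeight (n t : ℕ) : ℝ := √(((n : ℝ) - t) / (n * t))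

def cusumWeight (n t r : ℕ) : ℝ := if t ≤ r then cusumPostWeight n t else -cusumPreWeight n t

section CusumWeight

variable {n t : ℕ}

lemma cusumPreWeight_nonneg : 0 ≤ cusumPreWeight n t := sqrt_nonneg _

lemma cusumPostWeight_nonneg : 0 ≤ cusumPostWeight n t := sqrt_nonneg _

lemma cusumPostWeight_sq (htn : t < n) : cusumPostWeight n t ^ 2 = 1 / ((n : ℝ) - t) - 1 / n := by
  have hnt : (0 : ℝ) < n - t := by rw [sub_pos]; exact_mod_cast htn
  have hn : (0 : ℝ) < n := by exact_mod_cast (Nat.zero_le t).trans_lt htn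
  rw [cusumPostWeight, sq_sqrt (by positivity)]
  field_simp
  ring

lemma cusumPreWeight_sq (ht : 0 < t) (htn : t ≤ n) :
    cusumPreWeight n t ^ 2 = 1 / (t : ℝ) - 1 / n := by
  have hnt : (0 : ℝ) ≤ n - t := by rw [sub_nonneg]; exact_mod_cast htn
  have ht' : (0 : ℝ) < t := by exact_mod_cast ht
  have hn : (0 : ℝ) < n := by exact_mod_cast ht.trans_le htn
  rw [cusumPreWeight, sq_sqrt (by positivity)]
  field_simp

lemma cusum_eq_sum_cusumWeight {V : Type} (M : V × Fin n → ℝ) (j : V) (ht : 0 < t) (htn : t < n) :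
    cusum n M j t = ∑ r : Fin n, cusumWeight n t r * M (j, r) := by
  have hnt : (0 : ℝ) < n - t := by rw [sub_pos]; exact_mod_cast htn
  have ht' : (0 : ℝ) < t := by exact_mod_cast ht
  have hn : (0 : ℝ) < n := by exact_mod_cast ht.trans htn
  have hscale : 0 ≤ (t : ℝ) * (n - t) / n := by positivity
  have hpost : √((t : ℝ) * (n - t) / n) * (1 / (n - t)) = cusumPostWeight n t := by
    rw [← sqrt_sq (by positivity : (0 : ℝ) ≤ 1 / (n - t)), ← sqrt_mul hscale, cusumPostWeight]
    congr 1
    field_simp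
  have hpre : √((t : ℝ) * (n - t) / n) * (1 / t) = cusumPreWeight n t := by
    rw [← sqrt_sq (by positivity : (0 : ℝ) ≤ 1 / t), ← sqrt_mul hscale, cusumPreWeight]
    congr 1
    field_simp
  simp only [cusum, cusumWeight, ite_mul, Finset.sum_ite, not_le, neg_mul, Finset.sum_neg_distrib,
    ← Finset.mul_sum, ← hpost, ← hpre]
  ring

lemma sum_range_sub_cusumWeight_sq {a b : ℕ} (hab : a ≤ b) (hbn : b ≤ n) :
    ∑ r ∈ Finset.range n, (cusumWeight n a r - cusumWeight n b r) ^ 2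
      = a * (cusumPreWeight n a - cusumPreWeight n b) ^ 2
        + (b - a) * (cusumPostWeight n a + cusumPreWeight n b) ^ 2
        + (n - b) * (cusumPostWeight n b - cusumPostWeight n a) ^ 2 := by
  rw [← Finset.sum_range_add_sum_Ico _ (hab.trans hbn), ← Finset.sum_Ico_consecutive _ hab hbn]
  have h₁ : ∀ r ∈ Finset.range a, (cusumWeight n a r - cusumWeight n b r) ^ 2
      = (cusumPreWeight n a - cusumPreWeight n b) ^ 2 := fun r hr => by
    have := Finset.mem_range.mp hr
    rw [cusumWeight, cusumWeight, if_neg (by omega), if_neg (by omega)]; ring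
  have h₂ : ∀ r ∈ Finset.Ico a b, (cusumWeight n a r - cusumWeight n b r) ^ 2
      = (cusumPostWeight n a + cusumPreWeight n b) ^ 2 := fun r hr => by
    have := Finset.mem_Ico.mp hr
    rw [cusumWeight, cusumWeight, if_pos (by omega), if_neg (by omega)]; ring
  have h₃ : ∀ r ∈ Finset.Ico b n, (cusumWeight n a r - cusumWeight n b r) ^ 2
      = (cusumPostWeight n b - cusumPostWeight n a) ^ 2 := fun r hr => by
    have := Finset.mem_Ico.mp hr
    rw [cusumWeight, cusumWeight, if_pos (by omega), if_pos (by omega)]; ring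
  rw [Finset.sum_congr rfl h₁, Finset.sum_congr rfl h₂, Finset.sum_congr rfl h₃]
  simp only [Finset.sum_const, Finset.card_range, Nat.card_Ico, nsmul_eq_mul,
    Nat.cast_sub hab, Nat.cast_sub hbn, add_assoc]

lemma sum_range_sub_cusumWeight_sq_le_of_le {a b : ℕ} (ha : 0 < a) (hab : a ≤ b) (hbn : b < n) :
    ∑ r ∈ Finset.range n, (cusumWeight n a r - cusumWeight n b r) ^ 2
      ≤ 3 * ((b : ℝ) - a) * (1 / b + 1 / (n - a)) := by
  have ha' : (0 : ℝ) < a := by exact_mod_cast ha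
  have hab' : (a : ℝ) ≤ b := by exact_mod_cast hab
  have hbn' : (b : ℝ) < n := by exact_mod_cast hbn
  have hb' : (0 : ℝ) < b := ha'.trans_le hab'
  have hn' : (0 : ℝ) < n := hb'.trans hbn'
  have hPa := cusumPostWeight_sq (hab.trans_lt hbn)
  have hPb := cusumPostWeight_sq hbn
  have hNa := cusumPreWeight_sq ha (hab.trans hbn.le)
  have hNb := cusumPreWeight_sq (ha.trans_le hab) hbn.le
  have hpre_anti : cusumPreWeight n b ≤ cusumPreWeight n a := by
    refine (pow_le_pow_iff_left₀ cusumPreWeight_nonneg cusumPreWeight_nonneg two_ne_zero).mp ?_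
    rw [hNa, hNb]
    gcongr
  have hpost_mono : cusumPostWeight n a ≤ cusumPostWeight n b := by
    refine (pow_le_pow_iff_left₀ cusumPostWeight_nonneg cusumPostWeight_nonneg two_ne_zero).mp ?_
    rw [hPa, hPb]
    gcongr
  have hbefore : a * (cusumPreWeight n a - cusumPreWeight n b) ^ 2 ≤ (b - a) / b := calc
    _ ≤ a * (cusumPreWeight n a ^ 2 - cusumPreWeight n b ^ 2) :=
      by gcongr; exact sub_sq_le_sq_sub_sq cusumPreWeight_nonneg hpre_anti
    _ = (b - a) / b := by rw [hNa, hNb]; field_simp; ring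
  have hbetween : (b - a) * (cusumPostWeight n a + cusumPreWeight n b) ^ 2
      ≤ 2 * (b - a) * (1 / (n - a) + 1 / b) := calc
    _ ≤ (b - a) * (2 * (cusumPostWeight n a ^ 2 + cusumPreWeight n b ^ 2)) :=
      mul_le_mul_of_nonneg_left add_sq_le (by linarith)
    _ ≤ 2 * (b - a) * (1 / (n - a) + 1 / b) := by
      rw [hPa, hNb]
      have : (0 : ℝ) ≤ 1 / n := by positivity
      nlinarith
  have hafter : (n - b) * (cusumPostWeight n b - cusumPostWeight n a) ^ 2
      ≤ (b - a) / (n - a) := calc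
    _ ≤ (n - b) * (cusumPostWeight n b ^ 2 - cusumPostWeight n a ^ 2) :=
      mul_le_mul_of_nonneg_left (sub_sq_le_sq_sub_sq cusumPostWeight_nonneg hpost_mono)
        (by linarith)
    _ = (b - a) / (n - a) := by
      rw [hPa, hPb]
      have : (n : ℝ) - b ≠ 0 := by linarith
      have : (n : ℝ) - a ≠ 0 := by linarith
      field_simp
      ring
  rw [sum_range_sub_cusumWeight_sq hab hbn.le]
  have : (b - a) / b + 2 * (b - a) * (1 / (n - a) + 1 / b) + (b - a) / (n - a)
      = 3 * ((b : ℝ) - a) * (1 / b + 1 / (n - a)) := by ring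
  linarith

lemma sum_range_sub_cusumWeight_sq_le {a b : ℕ} (ha : 0 < a) (han : a < n) (hb : 0 < b)
    (hbn : b < n) :
    ∑ r ∈ Finset.range n, (cusumWeight n a r - cusumWeight n b r) ^ 2
      ≤ 3 * |(a : ℝ) - b| * (1 / a + 1 / (n - a)) := by
  have ha' : (0 : ℝ) < a := by exact_mod_cast ha
  have han' : (a : ℝ) < n := by exact_mod_cast han
  rcases le_total a b with hab | hba
  · have hab' : (a : ℝ) ≤ b := by exact_mod_cast hab
    calc _ ≤ 3 * ((b : ℝ) - a) * (1 / b + 1 / (n - a)) :=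
          sum_range_sub_cusumWeight_sq_le_of_le ha hab hbn
      _ ≤ _ := by rw [abs_sub_comm, abs_of_nonneg (by linarith)]; gcongr
  · have hba' : (b : ℝ) ≤ a := by exact_mod_cast hba
    rw [Finset.sum_congr rfl fun r _ => by rw [← neg_sub, neg_sq]]
    calc _ ≤ 3 * ((a : ℝ) - b) * (1 / a + 1 / (n - b)) :=
          sum_range_sub_cusumWeight_sq_le_of_le hb hba han
      _ ≤ _ := by rw [abs_of_nonneg (by linarith)]; gcongr

end CusumWeight

section CusumTail

variable {V : Type} {n : ℕ} (J : Finset V) (a b : V → ℕ)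

lemma sum_cusum_sub_eq_sum_mul (W : V × Fin n → ℝ) (ha : ∀ j ∈ J, 0 < a j ∧ a j < n)
    (hb : ∀ j ∈ J, 0 < b j ∧ b j < n) :
    ∑ j ∈ J, (cusum n W j (a j) - cusum n W j (b j))
      = ∑ i ∈ J ×ˢ (Finset.univ : Finset (Fin n)),
          (cusumWeight n (a i.1) i.2 - cusumWeight n (b i.1) i.2) * W i := by
  rw [Finset.sum_product]
  refine Finset.sum_congr rfl fun j hj => ?_
  rw [cusum_eq_sum_cusumWeight W j (ha j hj).1 (ha j hj).2,
    cusum_eq_sum_cusumWeight W j (hb j hj).1 (hb j hj).2, ← Finset.sum_sub_distrib]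
  exact Finset.sum_congr rfl fun r _ => by ring

lemma sum_sub_cusumWeight_sq_le {m D : ℝ} (hm : 0 < m) (ha : ∀ j ∈ J, m ≤ a j ∧ m ≤ n - a j)
    (hb : ∀ j ∈ J, 0 < b j ∧ b j < n) (hab : ∀ j ∈ J, |(a j : ℝ) - b j| ≤ D) :
    ∑ i ∈ J ×ˢ (Finset.univ : Finset (Fin n)),
        (cusumWeight n (a i.1) i.2 - cusumWeight n (b i.1) i.2) ^ 2 ≤ 6 * J.card * D / m := by
  have hterm : ∀ j ∈ J,
      ∑ r ∈ Finset.range n, (cusumWeight n (a j) r - cusumWeight n (b j) r) ^ 2 ≤ 6 * D / m := by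
    intro j hj
    obtain ⟨hma, hmna⟩ := ha j hj
    obtain ⟨ha0, han⟩ := pos_and_lt_of_le_of_le_sub hm ⟨hma, hmna⟩
    have hD : 0 ≤ D := (abs_nonneg _).trans (hab j hj)
    calc ∑ r ∈ Finset.range n, (cusumWeight n (a j) r - cusumWeight n (b j) r) ^ 2
      _ ≤ 3 * |(a j : ℝ) - b j| * (1 / a j + 1 / (n - a j)) :=
          sum_range_sub_cusumWeight_sq_le ha0 han (hb j hj).1 (hb j hj).2
      _ ≤ 3 * D * (1 / m + 1 / m) := by
          gcongr
          · exact add_nonneg (by positivity) (one_div_nonneg.mpr (by linarith))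
          · exact hab j hj
      _ = 6 * D / m := by ring
  calc ∑ i ∈ J ×ˢ (Finset.univ : Finset (Fin n)),
        (cusumWeight n (a i.1) i.2 - cusumWeight n (b i.1) i.2) ^ 2
    _ = ∑ j ∈ J, ∑ r ∈ Finset.range n, (cusumWeight n (a j) r - cusumWeight n (b j) r) ^ 2 := by
        rw [Finset.sum_product]
        exact Finset.sum_congr rfl fun j _ => Fin.sum_univ_eq_sum_range
          (fun r => (cusumWeight n (a j) r - cusumWeight n (b j) r) ^ 2) n
    _ ≤ J.card • (6 * D / m) := Finset.sum_le_card_nsmul _ _ _ hterm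
    _ = 6 * J.card * D / m := by rw [nsmul_eq_mul]; ring

lemma measureReal_lt_sum_cusum_sub_le [Fintype V] {m D s x : ℝ} (hm : 0 < m)
    (ha : ∀ j ∈ J, m ≤ a j ∧ m ≤ n - a j) (hb : ∀ j ∈ J, 0 < b j ∧ b j < n)
    (hab : ∀ j ∈ J, |(a j : ℝ) - b j| ≤ D) (hs : 0 ≤ s) (hx : 0 ≤ x)
    (hsx : 12 * J.card * D * x ≤ m * s ^ 2) :
    (Measure.pi fun _ : V × Fin n => gaussianReal 0 1).real
      {W | s < ∑ j ∈ J, (cusum n W j (a j) - cusum n W j (b j))} ≤ exp (-x) := by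
  simp_rw [sum_cusum_sub_eq_sum_mul J a b _
    (fun j hj => pos_and_lt_of_le_of_le_sub hm (ha j hj)) hb]
  refine ProbabilityTheory.measureReal_pi_gaussianReal_lt_sum_mul_le _ _ hs ?_
  calc 2 * (∑ i ∈ J ×ˢ (Finset.univ : Finset (Fin n)),
        (cusumWeight n (a i.1) i.2 - cusumWeight n (b i.1) i.2) ^ 2) * x
    _ ≤ 2 * (6 * J.card * D / m) * x := by
        gcongr
        exact sum_sub_cusumWeight_sq_le J a b hm ha hb hab
    _ ≤ s ^ 2 := by
        rw [mul_div_assoc', div_mul_eq_mul_div, div_le_iff₀ hm]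
        linarith

end CusumTail

lemma measureReal_lt_sum_cusum_sub_dist_le {V : Type} [Fintype V] {G : SimpleGraph V}
    (hG : G.Connected) (J : Finset V) {n zstar tstar : ℕ} {jstar kstar : V} {T : ℝ}
    (hT : 2 * (Fintype.card V : ℝ) ≤ T) (hTz : T ≤ zstar) (hTz' : T ≤ n - zstar) (ht : 1 ≤ tstar)
    (hJ : ∀ j ∈ J, tstar + G.dist j kstar ≤ n - 1) :
    (Measure.pi fun _ : V × Fin n => gaussianReal 0 1).real
      {W | 7 * √(J.card * (|(zstar : ℝ) - tstar| + G.dist kstar jstar)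
            * log ((Fintype.card V : ℝ) * n) / T)
          < ∑ j ∈ J, (cusum n W j (zstar + G.dist j jstar) - cusum n W j (tstar + G.dist j kstar))}
      ≤ (((Fintype.card V : ℝ) * n) ^ 2)⁻¹ := by
  set p := Fintype.card V
  set D := |(zstar : ℝ) - tstar| + G.dist kstar jstar
  have hp : (1 : ℝ) ≤ p := by exact_mod_cast Fintype.card_pos_iff.mpr ⟨jstar⟩
  have hn : (1 : ℝ) ≤ n := by linarith [(Nat.cast_nonneg zstar : (0 : ℝ) ≤ zstar)]
  have hL : 0 ≤ log (p * n) := log_nonneg (one_le_mul_of_one_le_of_one_le hp hn)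
  have hdist : ∀ j, (G.dist j jstar : ℝ) + 1 ≤ p := fun j => by
    exact_mod_cast G.dist_lt_card j jstar
  have hD : 0 ≤ D := by positivity
  rw [← exp_log (by positivity : (0 : ℝ) < (p * n) ^ 2), ← exp_neg]
  refine measureReal_lt_sum_cusum_sub_le J _ _ (m := T / 2) (D := D) (by linarith)
    (fun j _ => ⟨?_, ?_⟩) (fun j hj => ⟨by omega, by have := hJ j hj; omega⟩) (fun j _ => ?_)
    (by positivity) (by rw [log_pow]; exact mul_nonneg (by norm_num) hL) ?_
  · push_cast; linarith [(Nat.cast_nonneg _ : (0 : ℝ) ≤ G.dist j jstar)]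
  · push_cast; linarith [hdist j]
  · push_cast
    calc |(zstar : ℝ) + G.dist j jstar - (tstar + G.dist j kstar)|
      _ = |((zstar : ℝ) - tstar) + (G.dist j jstar - G.dist j kstar)| := by ring_nf
      _ ≤ |(zstar : ℝ) - tstar| + |(G.dist j kstar : ℝ) - G.dist j jstar| := by
          rw [abs_sub_comm (G.dist j kstar : ℝ)]; exact abs_add_le _ _
      _ ≤ D := add_le_add le_rfl (hG.abs_dist_sub_dist_le j kstar jstar)
  · have hTpos : 0 < T := by linarith
    have hJDL : 0 ≤ J.card * D * log (p * n) := by positivity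
    rw [log_pow, mul_pow, Real.sq_sqrt (div_nonneg hJDL hTpos.le)]
    -- `m s² = (49 / 2) |J| D log (pn)` against `12 |J| D x = 48 |J| D log (pn)`: hence `C = 7`.
    field_simp
    push_cast
    linarith

/-- Proposition 5: uniform control of the noise CUSUM differences over candidate
change-point/source pairs. -/
theorem cusum_noise_difference_bound :
    ∃ C : ℝ, 0 < C ∧
      ∀ (n p : ℕ), 1 ≤ n → 1 ≤ p →
      ∀ (G : SimpleGraph (Fin p)), G.Connected →
      ∀ (jstar : Fin p) (zstar : ℕ), 1 ≤ zstar → zstar ≤ n - 1 →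
      ∀ (C1 τ : ℝ), 0 < C1 →
        τ = min ((zstar : ℝ) / n) (1 - (zstar : ℝ) / n) →
        2 * (p : ℝ) ≤ (n : ℝ) * τ →
        1 - 1 / ((p : ℝ) * n) ≤
          ((Measure.pi fun _ : Fin p × Fin n => gaussianReal 0 1)
            {W : Fin p × Fin n → ℝ | ∀ (tstar : ℕ) (kstar : Fin p),
              1 ≤ tstar → tstar ≤ n - 1 →
              (∀ j ∈ JSet G.dist jstar zstar C1 tstar kstar,
                tstar + G.dist j kstar ≤ n - 1) →
              ∑ j ∈ JSet G.dist jstar zstar C1 tstar kstar,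
                  (cusum n W j (zstar + G.dist j jstar)
                    - cusum n W j (tstar + G.dist j kstar)) ≤
                C * Real.sqrt (((JSet G.dist jstar zstar C1 tstar kstar).card : ℝ)
                    * (|(zstar : ℝ) - (tstar : ℝ)| + (G.dist kstar jstar : ℝ))
                    * Real.log ((p : ℝ) * n) / ((n : ℝ) * τ))}).toReal := by
  refine ⟨7, by norm_num, ?_⟩
  intro n p hn hp G hG jstar zstar _ _ C1 τ _ hτ hpτ
  have hn' : (0 : ℝ) < n := by exact_mod_cast hn
  have hnτ : (n : ℝ) * τ = min (zstar : ℝ) (n - zstar) := by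
    rw [hτ, mul_min_of_nonneg _ _ hn'.le, mul_div_cancel₀ _ hn'.ne', mul_sub, mul_one,
      mul_div_cancel₀ _ hn'.ne']
  have hpn : (0 : ℝ) < p * n := by positivity
  set s := (Finset.Icc 1 (n - 1) ×ˢ (Finset.univ : Finset (Fin p))).filter
    fun i => ∀ j ∈ JSet G.dist jstar zstar C1 i.1 i.2, i.1 + G.dist j i.2 ≤ n - 1
  have hs : (s.card : ℝ) ≤ p * n := by
    have : s.card ≤ (n - 1) * p := by
      simpa using Finset.card_filter_le (Finset.Icc 1 (n - 1) ×ˢ (Finset.univ : Finset (Fin p))) _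
    exact_mod_cast this.trans (by rw [mul_comm]; exact Nat.mul_le_mul_left p (Nat.sub_le n 1))
  calc 1 - 1 / ((p : ℝ) * n)
    _ ≤ 1 - s.card * (((p : ℝ) * n) ^ 2)⁻¹ := by
        rw [sq, mul_inv, ← mul_assoc, one_div, sub_le_sub_iff_left]
        exact mul_le_of_le_one_left (by positivity) ((div_le_one hpn).mpr hs)
    _ ≤ (Measure.pi fun _ : Fin p × Fin n => gaussianReal 0 1).real {W | ∀ i ∈ s,
          ∑ j ∈ JSet G.dist jstar zstar C1 i.1 i.2,
            (cusum n W j (zstar + G.dist j jstar) - cusum n W j (i.1 + G.dist j i.2)) ≤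
          7 * √((JSet G.dist jstar zstar C1 i.1 i.2).card * (|(zstar : ℝ) - i.1| + G.dist i.2 jstar)
            * log (p * n) / (n * τ))} :=
        one_sub_card_mul_le_measureReal_setOf_forall_mem _ s _ fun i hi => by
          obtain ⟨hmem, hside⟩ := Finset.mem_filter.mp hi
          simp only [not_le]
          simpa using measureReal_lt_sum_cusum_sub_dist_le hG _ (T := n * τ) (by simpa using hpτ)
            (hnτ ▸ min_le_left _ _) (hnτ ▸ min_le_right _ _)
            (Finset.mem_Icc.mp (Finset.mem_product.mp hmem).1).1 hside
    _ ≤ _ := by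
        refine measureReal_mono fun W hW => ?_
        exact fun t k ht₁ ht₂ hside => hW (t, k) (Finset.mem_filter.mpr ⟨by simp [ht₁, ht₂], hside⟩)
end
end

section
/- Let G be a connected graph on vertex set {1,…,p} with graph distance d_G, fix j* ∈ {1,…,p}, z* ∈ {1,…,n}, and μ⁰, μ¹ ∈ ℝ^p with θ_j := μ¹_j − μ⁰_j > 0. Let μ ∈ ℝ^{p×n} be the matrix with entries μ_{j,t} = μ⁰_j if t ≤ z* + d_G(j, j*) and μ_{j,t} = μ¹_j if t > z* + d_G(j, j*), set A := 𝒯(μ), and suppose z := z* + d_G(j, j*) satisfies 1 ≤ z ≤ n − 1. Then the sequence t ↦ A_{j,t} is nondecreasing for t ∈ {1,…,z} and nonincreasing for t ∈ {z,…,n−1}; in particular it attains its maximum over t ∈ {1,…,n−1} at t = z. -/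
open MeasureTheory ProbabilityTheory Finset

noncomputable section

attribute [local instance] Classical.propDecidable

/-!
Row `j` of the mean matrix is a single step from `μ⁰_j` to `μ¹_j` after time `z`. For such a
step the two sample means in the CUSUM statistic are explicit, and the statistic becomes
`(y - x) (n - z) √(t / (n (n - t)))` for `t ≤ z` and `(y - x) z √((n - t) / (n t))` for
`t ≥ z`; with `x ≤ y`, the first increases and the second decreases in `t`.
-/

lemma sum_filter_le_fin (n t : ℕ) (g : ℕ → ℝ) :
    ∑ r ∈ univ.filter (fun r : Fin n => t ≤ (r : ℕ)), g r = ∑ r ∈ Ico t n, g r := by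
  rw [sum_filter, Fin.sum_univ_eq_sum_range (fun r => if t ≤ r then g r else 0) n,
    ← sum_filter]
  congr 1
  ext r
  simp only [mem_filter, mem_range, mem_Ico]
  omega

lemma sum_filter_lt_fin {n t : ℕ} (ht : t ≤ n) (g : ℕ → ℝ) :
    ∑ r ∈ univ.filter (fun r : Fin n => (r : ℕ) < t), g r = ∑ r ∈ range t, g r := by
  rw [sum_filter, Fin.sum_univ_eq_sum_range (fun r => if r < t then g r else 0) n,
    ← sum_filter]
  congr 1
  ext r
  simp only [mem_filter, mem_range]
  omega

lemma sum_Ico_step {a b z : ℕ} (haz : a ≤ z) (hzb : z ≤ b) (x y : ℝ) :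
    ∑ r ∈ Ico a b, (if r + 1 ≤ z then x else y) = ((z : ℝ) - a) * x + ((b : ℝ) - z) * y := by
  rw [← sum_Ico_consecutive _ haz hzb,
    sum_congr rfl (fun r hr => if_pos (by rw [mem_Ico] at hr; omega)),
    sum_congr rfl (fun r hr => if_neg (by rw [mem_Ico] at hr; omega)),
    sum_const, sum_const, Nat.card_Ico, Nat.card_Ico, nsmul_eq_mul, nsmul_eq_mul,
    Nat.cast_sub haz, Nat.cast_sub hzb]

section StepMean

variable {V : Type} {n : ℕ} {M : V × Fin n → ℝ} {j : V} {z : ℕ} {x y : ℝ}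

lemma cusum_of_step_of_le (hM : ∀ r : Fin n, M (j, r) = if (r : ℕ) + 1 ≤ z then x else y)
    {t : ℕ} (ht : 1 ≤ t) (htz : t ≤ z) (hzn : z < n) :
    cusum n M j t = (y - x) * ((n : ℝ) - z) * √((t : ℝ) / (n * ((n : ℝ) - t))) := by
  have h_right : ∑ r ∈ univ.filter (fun r : Fin n => t ≤ (r : ℕ)), M (j, r)
      = ((z : ℝ) - t) * x + ((n : ℝ) - z) * y := by
    rw [sum_congr rfl (fun r _ => hM r),
      sum_filter_le_fin n t (fun r => if r + 1 ≤ z then x else y), sum_Ico_step htz hzn.le]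
  have h_left : ∑ r ∈ univ.filter (fun r : Fin n => (r : ℕ) < t), M (j, r) = t * x := by
    rw [sum_congr rfl (fun r _ => hM r),
      sum_filter_lt_fin (by omega) (fun r => if r + 1 ≤ z then x else y),
      sum_congr rfl (fun r hr => if_pos (by rw [mem_range] at hr; omega)),
      sum_const, card_range, nsmul_eq_mul]
  have ht₀ : (0 : ℝ) < t := by exact_mod_cast ht
  have hnt : (0 : ℝ) < (n : ℝ) - t := sub_pos.mpr (by exact_mod_cast htz.trans_lt hzn)
  have hn : (0 : ℝ) < n := ht₀.trans (sub_pos.mp hnt)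
  have h_sqrt :
      √((t : ℝ) * ((n : ℝ) - t) / n) = √((t : ℝ) / (n * ((n : ℝ) - t))) * ((n : ℝ) - t) := by
    have h_arg :
        (t : ℝ) * ((n : ℝ) - t) / n = (t : ℝ) / (n * ((n : ℝ) - t)) * ((n : ℝ) - t) ^ 2 := by
      field_simp
    rw [h_arg, Real.sqrt_mul' _ (sq_nonneg _), Real.sqrt_sq hnt.le]
  rw [cusum, h_right, h_left, h_sqrt]
  field_simp
  ring

lemma cusum_of_step_of_ge (hM : ∀ r : Fin n, M (j, r) = if (r : ℕ) + 1 ≤ z then x else y)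
    {t : ℕ} (hz : 1 ≤ z) (hzt : z ≤ t) (htn : t < n) :
    cusum n M j t = (y - x) * z * √(((n : ℝ) - t) / (n * t)) := by
  have h_right : ∑ r ∈ univ.filter (fun r : Fin n => t ≤ (r : ℕ)), M (j, r)
      = ((n : ℝ) - t) * y := by
    rw [sum_congr rfl (fun r _ => hM r),
      sum_filter_le_fin n t (fun r => if r + 1 ≤ z then x else y),
      sum_congr rfl (fun r hr => if_neg (by rw [mem_Ico] at hr; omega)),
      sum_const, Nat.card_Ico, nsmul_eq_mul, Nat.cast_sub htn.le]
  have h_left : ∑ r ∈ univ.filter (fun r : Fin n => (r : ℕ) < t), M (j, r)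
      = z * x + ((t : ℝ) - z) * y := by
    rw [sum_congr rfl (fun r _ => hM r),
      sum_filter_lt_fin htn.le (fun r => if r + 1 ≤ z then x else y),
      range_eq_Ico, sum_Ico_step (Nat.zero_le z) hzt, Nat.cast_zero, sub_zero]
  have ht₀ : (0 : ℝ) < t := by exact_mod_cast hz.trans hzt
  have hnt : (0 : ℝ) < (n : ℝ) - t := sub_pos.mpr (by exact_mod_cast htn)
  have hn : (0 : ℝ) < n := ht₀.trans (sub_pos.mp hnt)
  have h_sqrt : √((t : ℝ) * ((n : ℝ) - t) / n) = √(((n : ℝ) - t) / (n * t)) * t := by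
    have h_arg : (t : ℝ) * ((n : ℝ) - t) / n = ((n : ℝ) - t) / (n * t) * (t : ℝ) ^ 2 := by
      field_simp
    rw [h_arg, Real.sqrt_mul' _ (sq_nonneg _), Real.sqrt_sq ht₀.le]
  rw [cusum, h_right, h_left, h_sqrt]
  field_simp
  ring

lemma monotoneOn_cusum_of_step (hM : ∀ r : Fin n, M (j, r) = if (r : ℕ) + 1 ≤ z then x else y)
    (hxy : x ≤ y) (hzn : z < n) : MonotoneOn (cusum n M j) (Set.Icc 1 z) := by
  rintro s ⟨hs, hsz⟩ t ⟨ht, htz⟩ hst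
  rw [cusum_of_step_of_le hM hs hsz hzn, cusum_of_step_of_le hM ht htz hzn]
  have hnt : (0 : ℝ) < (n : ℝ) - t := sub_pos.mpr (by exact_mod_cast htz.trans_lt hzn)
  have hn : (0 : ℝ) < n := by exact_mod_cast (Nat.zero_le _).trans_lt hzn
  have hzn' : (z : ℝ) ≤ n := by exact_mod_cast hzn.le
  have h_coeff : 0 ≤ (y - x) * ((n : ℝ) - z) :=
    mul_nonneg (sub_nonneg.mpr hxy) (sub_nonneg.mpr hzn')
  gcongr

lemma antitoneOn_cusum_of_step (hM : ∀ r : Fin n, M (j, r) = if (r : ℕ) + 1 ≤ z then x else y)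
    (hxy : x ≤ y) (hz : 1 ≤ z) : AntitoneOn (cusum n M j) (Set.Icc z (n - 1)) := by
  rintro s ⟨hzs, hsn⟩ t ⟨hzt, htn⟩ hst
  rw [cusum_of_step_of_ge hM hz hzs (by omega), cusum_of_step_of_ge hM hz hzt (by omega)]
  have hs₀ : (0 : ℝ) < s := by exact_mod_cast hz.trans hzs
  have hsn' : (s : ℝ) ≤ n := by exact_mod_cast (show s ≤ n by omega)
  have h_coeff : 0 ≤ (y - x) * z := mul_nonneg (sub_nonneg.mpr hxy) (Nat.cast_nonneg z)
  have hns : (0 : ℝ) < n * s := mul_pos (hs₀.trans_le hsn') hs₀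
  gcongr

end StepMean

/-- Unimodality of the CUSUM transform of the mean matrix: it is nondecreasing up to
the time of spread z = z* + d_G(j, j*) and nonincreasing afterwards, hence maximised
at t = z. -/
theorem cusum_mean_unimodal :
    ∀ (n p : ℕ), 1 ≤ n → 1 ≤ p →
    ∀ (G : SimpleGraph (Fin p)), G.Connected →
    ∀ (jstar : Fin p) (zstar : ℕ), 1 ≤ zstar → zstar ≤ n →
    ∀ (μ0 μ1 : Fin p → ℝ) (M : Fin p × Fin n → ℝ),
      M = (fun jt : Fin p × Fin n =>
        if (jt.2 : ℕ) + 1 ≤ zstar + G.dist jt.1 jstar then μ0 jt.1 else μ1 jt.1) →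
    ∀ j : Fin p, 0 < μ1 j - μ0 j →
    ∀ z : ℕ, z = zstar + G.dist j jstar → 1 ≤ z → z ≤ n - 1 →
      (∀ t : ℕ, 1 ≤ t → t < z → cusum n M j t ≤ cusum n M j (t + 1)) ∧
      (∀ t : ℕ, z ≤ t → t + 1 ≤ n - 1 → cusum n M j (t + 1) ≤ cusum n M j t) ∧
      (∀ t : ℕ, 1 ≤ t → t ≤ n - 1 → cusum n M j t ≤ cusum n M j z) := by
  intro n p _ _ G _ jstar zstar _ _ μ0 μ1 M hM j hθ z hz hz₁ hzn
  have hstep : ∀ r : Fin n, M (j, r) = if (r : ℕ) + 1 ≤ z then μ0 j else μ1 j := by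
    intro r
    rw [hM, hz]
  have hxy : μ0 j ≤ μ1 j := (sub_pos.mp hθ).le
  have hmono := monotoneOn_cusum_of_step hstep hxy (by omega)
  have hanti := antitoneOn_cusum_of_step hstep hxy hz₁
  refine ⟨fun t ht htz => hmono ⟨ht, htz.le⟩ ⟨by omega, htz⟩ (by omega),
    fun t hzt htn => hanti ⟨hzt, by omega⟩ ⟨by omega, htn⟩ (by omega), fun t ht htn => ?_⟩
  rcases le_total t z with htz | hzt
  · exact hmono ⟨ht, htz⟩ ⟨hz₁, le_rfl⟩ htz
  · exact hanti ⟨le_rfl, hzn⟩ ⟨hzt, htn⟩ hzt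
end
end

section
/- Let n > 0 be a real number and let t, z be real numbers with 0 < t ≤ z < n. Then | √(n/(z(n − z))) − √(n/(t(n − t))) | ≤ √2·(z − t) / min(t, n − z)^{3/2}. -/
/-!
With `φ x = x (n - x) / n` the quantity is `φ(x)^(-1/2)`. On `[t, z]` we have `φ ≥ m / 2`,
`m = min t (n - z)`, because the smaller of `x`, `n - x` is at least `m` and the larger at least
`n / 2`. On `[m / 2, ∞)` the map `u ↦ u^(-1/2)` is Lipschitz with constant
`(1/2) (m/2)^(-3/2) = √2 / m^(3/2)`, and `φ` is `1`-Lipschitz on `[0, n]` since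
`φ s - φ t = (s - t) (n - s - t) / n`.
-/

open MeasureTheory ProbabilityTheory Finset

noncomputable section

attribute [local instance] Classical.propDecidable

theorem Real.rpow_three_halves {x : ℝ} (hx : 0 ≤ x) : x ^ ((3 : ℝ) / 2) = x * √x := by
  rw [show (3 : ℝ) / 2 = 1 + 1 / 2 by norm_num, Real.rpow_add' hx (by norm_num), Real.rpow_one,
    ← Real.sqrt_eq_rpow]

theorem abs_inv_sqrt_sub_inv_sqrt_le {a b c : ℝ} (hc : 0 < c) (hca : c ≤ a) (hcb : c ≤ b) :
    |(√a)⁻¹ - (√b)⁻¹| ≤ |a - b| / (2 * (c * √c)) := by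
  have hsc : 0 < √c := Real.sqrt_pos.2 hc
  have hsa : √c ≤ √a := Real.sqrt_le_sqrt hca
  have hsb : √c ≤ √b := Real.sqrt_le_sqrt hcb
  have hden : 2 * (c * √c) ≤ √a * √b * (√a + √b) :=
    calc 2 * (c * √c) = √c * √c * (√c + √c) := by rw [Real.mul_self_sqrt hc.le]; ring
      _ ≤ √a * √b * (√a + √b) := by gcongr
  have hdiff : (√a)⁻¹ - (√b)⁻¹ = (b - a) / (√a * √b * (√a + √b)) := by
    have : √a ≠ 0 := (hsc.trans_le hsa).ne'
    have : √b ≠ 0 := (hsc.trans_le hsb).ne'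
    field_simp
    linear_combination Real.sq_sqrt (hc.le.trans hcb) - Real.sq_sqrt (hc.le.trans hca)
  rw [hdiff, abs_div, abs_sub_comm b a, abs_of_pos (hden.trans_lt' (by positivity))]
  gcongr

theorem mul_div_two_le_mul_sub {x n c : ℝ} (hc : 0 ≤ c) (hcx : c ≤ x) (hcn : c ≤ n - x) :
    c * n / 2 ≤ x * (n - x) := by
  nlinarith [mul_nonneg (sub_nonneg.2 hcx) (hc.trans hcn),
    mul_nonneg (sub_nonneg.2 hcn) (hc.trans hcx)]

theorem abs_mul_sub_div_sub_mul_sub_div_le {n s t : ℝ} (hn : 0 < n) (hs : 0 ≤ s) (ht : 0 ≤ t)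
    (hsn : s ≤ n) (htn : t ≤ n) :
    |s * (n - s) / n - t * (n - t) / n| ≤ |s - t| := by
  rw [show s * (n - s) / n - t * (n - t) / n = (s - t) * ((n - s - t) / n) by field_simp; ring,
    abs_mul]
  refine mul_le_of_le_one_right (abs_nonneg _) ?_
  rw [abs_div, abs_of_pos hn, div_le_one hn, abs_le]
  constructor <;> linarith

/-- Mean value bound for the difference of CUSUM normalisation factors. -/
theorem sqrt_normalisation_difference_bound :
    ∀ n t z : ℝ, 0 < t → t ≤ z → z < n →
      |Real.sqrt (n / (z * (n - z))) - Real.sqrt (n / (t * (n - t)))| ≤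
        Real.sqrt 2 * (z - t) / (min t (n - z)) ^ ((3 : ℝ) / 2) := by
  intro n t z ht htz hzn
  set m := min t (n - z)
  have hm : 0 < m := lt_min ht (by linarith)
  have hn : 0 < n := by linarith
  have hφ_ge : ∀ x, t ≤ x → x ≤ z → m / 2 ≤ x * (n - x) / n := fun x htx hxz => by
    rw [le_div_iff₀ hn]
    linarith [mul_div_two_le_mul_sub hm.le ((min_le_left _ _).trans htx)
      ((min_le_right _ _).trans (by linarith : n - z ≤ n - x))]
  calc |√(n / (z * (n - z))) - √(n / (t * (n - t)))|
      = |(√(z * (n - z) / n))⁻¹ - (√(t * (n - t) / n))⁻¹| := by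
        rw [← Real.sqrt_inv, ← Real.sqrt_inv, inv_div, inv_div]
    _ ≤ |z * (n - z) / n - t * (n - t) / n| / (2 * (m / 2 * √(m / 2))) :=
        abs_inv_sqrt_sub_inv_sqrt_le (by positivity) (hφ_ge z htz le_rfl) (hφ_ge t le_rfl htz)
    _ ≤ (z - t) / (2 * (m / 2 * √(m / 2))) := by
        gcongr
        rw [← abs_of_nonneg (sub_nonneg.2 htz)]
        exact abs_mul_sub_div_sub_mul_sub_div_le hn (by linarith) ht.le hzn.le (by linarith)
    _ = √2 * (z - t) / m ^ ((3 : ℝ) / 2) := by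
        rw [Real.rpow_three_halves hm.le, Real.sqrt_div' _ zero_le_two]
        field_simp

end
end

section
/- Let B, λ, q, L be nonnegative real numbers. If λ ≥ 2√(qL) + 2L and B ≥ 8λ, then B − 2√((q + 2B)·L) ≥ λ. -/
open MeasureTheory ProbabilityTheory Finset

noncomputable section

attribute [local instance] Classical.propDecidable

theorem Real.sqrt_add_le_sqrt_add_sqrt (x y : ℝ) : √(x + y) ≤ √x + √y := by
  calc √(x + y) ≤ √(√x ^ 2 + √y ^ 2) := by
        gcongr <;> simp only [Real.sq_sqrt', le_max_left]
    _ ≤ √x + √y := by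
        rw [Real.sqrt_le_iff]
        constructor
        · positivity
        · nlinarith [Real.sqrt_nonneg x, Real.sqrt_nonneg y]

theorem Real.sqrt_mul_le_half_add {x y : ℝ} (h : 0 ≤ x + y) : √(x * y) ≤ (x + y) / 2 := by
  rw [Real.sqrt_le_iff]
  exact ⟨by linarith, by nlinarith [sq_nonneg (x - y)]⟩

/-- Elementary inequality used in the power analysis of the SpreadDetect test. -/
theorem noncentral_chisq_threshold_ineq :
    ∀ B lam q L : ℝ, 0 ≤ B → 0 ≤ lam → 0 ≤ q → 0 ≤ L →
      2 * Real.sqrt (q * L) + 2 * L ≤ lam → 8 * lam ≤ B →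
      lam ≤ B - 2 * Real.sqrt ((q + 2 * B) * L) := by
  intro B lam q L hB _ _ hL hlam hB_ge
  have hsplit : √((q + 2 * B) * L) ≤ √(q * L) + √(2 * B * L) := by
    rw [add_mul]
    exact Real.sqrt_add_le_sqrt_add_sqrt _ _
  have hamgm : √(2 * B * L) ≤ B / 4 + 2 * L :=
    calc √(2 * B * L) = √(B / 2 * (4 * L)) := by ring_nf
      _ ≤ (B / 2 + 4 * L) / 2 := Real.sqrt_mul_le_half_add (by positivity)
      _ = B / 4 + 2 * L := by ring
  -- the right side is now at least B / 2 - λ - 2L ≥ B / 2 - 2λ ≥ 2λ, as 2L ≤ λ and 8λ ≤ B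
  linarith [Real.sqrt_nonneg (q * L)]

end
end
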